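/- Let C₂, C₁, C₀ be finitely generated free ℤ-modules with ℤ-linear maps ∂₂ : C₂ → C₁ and ∂₁ : C₁ → C₀ satisfying ∂₁ ∘ ∂₂ = 0, and let G be the circle group Circle (respectively, G = ℂˣ). Let d₀ : Hom(C₀,G) → Hom(C₁,G) and d₁ : Hom(C₁,G) → Hom(C₂,G) be precomposition with ∂₁ and ∂₂ respectively. Then the sequence 1 → ker d₁ ⧸ im d₀ → Hom(C₁,G) ⧸ im d₀ → Hom(C₂,G) → Hom(ker ∂₂, G) → 1 is exact, where the first map is the natural inclusion, the second is induced by d₁, and the third is restriction to ker ∂₂. Equivalently: (i) restriction Hom(C₂,G) → Hom(ker ∂₂,G) is surjective; (ii) a homomorphism Ω : C₂ → G restricts trivially to ker ∂₂ if and only if Ω = η ∘ ∂₂ for some η ∈ Hom(C₁,G); (iii) for η ∈ Hom(C₁,G), η ∘ ∂₂ is trivial if and only if the class of η in Hom(C₁,G) ⧸ im d₀ lies in the image of ker d₁ ⧸ im d₀. -/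

import Mathlib

/-!
`Circle` and `ℂˣ` are images of the divisible groups `ℝ` and `ℂ` under the exponential map, so
they are divisible and hence, by Baer's criterion, injective ℤ-modules. Injectivity of `G` gives
(i) by extending along `ker ∂₂ ↪ C₂`, and (ii) by factoring `Ω` through `C₂ ⧸ ker ∂₂ ≅ im ∂₂` and
extending along `im ∂₂ ↪ C₁`. Part (iii) is immediate from `∂₁ ∘ ∂₂ = 0`.
-/

/-- Exactness of the sequence
`1 → ker d₁ ⧸ im d₀ → Hom(C₁,G) ⧸ im d₀ → Hom(C₂,G) → Hom(ker ∂₂, G) → 1`,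
stated equivalently as: (i) restriction `Hom(C₂,G) → Hom(ker ∂₂,G)` is surjective;
(ii) `Ω : C₂ → G` is trivial on `ker ∂₂` iff `Ω = η ∘ ∂₂`; (iii) `η ∘ ∂₂` is trivial iff
`η` differs from a form closed under `d₁` by a form in the image of `d₀`. -/
def FundSeqOfFormsExact {C₂ C₁ C₀ : Type*}
    [AddCommGroup C₂] [AddCommGroup C₁] [AddCommGroup C₀]
    [Module ℤ C₂] [Module ℤ C₁] [Module ℤ C₀]
    (bd2 : C₂ →ₗ[ℤ] C₁) (bd1 : C₁ →ₗ[ℤ] C₀)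
    (G : Type*) [CommGroup G] : Prop :=
  (∀ μ : AddChar (LinearMap.ker bd2) G, ∃ Ω : AddChar C₂ G,
    ∀ c : LinearMap.ker bd2, Ω (c : C₂) = μ c) ∧
  (∀ Ω : AddChar C₂ G,
    (∀ c ∈ LinearMap.ker bd2, Ω c = 1) ↔ ∃ η : AddChar C₁ G, ∀ x, Ω x = η (bd2 x)) ∧
  (∀ η : AddChar C₁ G,
    (∀ s, η (bd2 s) = 1) ↔
      ∃ θ : AddChar C₁ G, (∀ s, θ (bd2 s) = 1) ∧
        ∃ g : AddChar C₀ G, ∀ x, η x = θ x * g (bd1 x))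

noncomputable instance : DivisibleBy (Additive Circle) ℤ :=
  Circle.exp_surjective.divisibleBy Circle.expHom fun x n => map_zsmul Circle.expHom n x

noncomputable instance : DivisibleBy (Additive ℂˣ) ℤ :=
  Function.Surjective.divisibleBy
    (fun z : ℂ => Additive.ofMul (Units.mk0 (Complex.exp z) (Complex.exp_ne_zero z)))
    (fun x => ⟨Complex.log x.toMul, Units.ext (Complex.exp_log x.toMul.ne_zero)⟩)
    fun z n => by
      rw [← ofMul_zpow]
      exact congrArg Additive.ofMul (Units.ext (by simp [Complex.exp_int_mul]))

namespace AddChar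

variable {A B G : Type*} [AddCommGroup A] [AddCommGroup B] [CommGroup G]
  [DivisibleBy (Additive G) ℤ]

theorem exists_extend_of_injective (i : A →+ B) (hi : Function.Injective i) (ψ : AddChar A G) :
    ∃ Ψ : AddChar B G, ∀ a, Ψ (i a) = ψ a := by
  obtain ⟨φ, hφ⟩ := (Module.Baer.of_divisible (Additive G)).extension_property_addMonoidHom
    i hi (toAddMonoidHomEquiv ψ)
  exact ⟨toAddMonoidHomEquiv.symm φ, fun a => congr(Additive.toMul ($hφ a))⟩

theorem exists_eq_comp_of_ker_le (f : A →+ B) (ψ : AddChar A G) (hψ : ∀ a ∈ f.ker, ψ a = 1) :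
    ∃ Ψ : AddChar B G, ∀ a, ψ a = Ψ (f a) := by
  have hker : f.rangeRestrict.ker ≤ (toAddMonoidHomEquiv ψ).ker := by
    rw [AddMonoidHom.ker_rangeRestrict]
    exact fun a ha => congr(Additive.ofMul $(hψ a ha))
  let φ := f.rangeRestrict.liftOfSurjective f.rangeRestrict_surjective ⟨_, hker⟩
  obtain ⟨Ψ, hΨ⟩ := exists_extend_of_injective f.range.subtype Subtype.val_injective
    (toAddMonoidHomEquiv.symm φ)
  refine ⟨Ψ, fun a => ?_⟩
  rw [← f.coe_rangeRestrict, ← AddSubgroup.coe_subtype, hΨ]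
  simp [φ]

end AddChar

section FormSequence

variable {C₂ C₁ C₀ : Type*} [AddCommGroup C₂] [AddCommGroup C₁] [AddCommGroup C₀]
  [Module ℤ C₂] [Module ℤ C₁] [Module ℤ C₀] (bd2 : C₂ →ₗ[ℤ] C₁) (bd1 : C₁ →ₗ[ℤ] C₀)

theorem comp_boundary_eq_one_iff_of_comp_eq_zero {G : Type*} [CommGroup G]
    (hcomplex : bd1 ∘ₗ bd2 = 0) (η : AddChar C₁ G) :
    (∀ s, η (bd2 s) = 1) ↔
      ∃ θ : AddChar C₁ G, (∀ s, θ (bd2 s) = 1) ∧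
        ∃ g : AddChar C₀ G, ∀ x, η x = θ x * g (bd1 x) := by
  refine ⟨fun hη => ⟨η, hη, 1, fun x => by simp⟩, ?_⟩
  rintro ⟨θ, hθ, g, hg⟩ s
  have hbd : bd1 (bd2 s) = 0 := LinearMap.congr_fun hcomplex s
  rw [hg, hθ, hbd, AddChar.map_zero_eq_one, one_mul]

theorem fundSeqOfFormsExact_of_divisible (hcomplex : bd1 ∘ₗ bd2 = 0)
    (G : Type*) [CommGroup G] [DivisibleBy (Additive G) ℤ] :
    FundSeqOfFormsExact bd2 bd1 G := by
  refine ⟨fun μ => ?_, fun Ω => ⟨fun hΩ => ?_, ?_⟩,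
    comp_boundary_eq_one_iff_of_comp_eq_zero bd2 bd1 hcomplex⟩
  · exact AddChar.exists_extend_of_injective (LinearMap.ker bd2).subtype.toAddMonoidHom
      Subtype.val_injective μ
  · exact AddChar.exists_eq_comp_of_ker_le bd2.toAddMonoidHom Ω hΩ
  · rintro ⟨η, hη⟩ c hc
    rw [hη, LinearMap.mem_ker.mp hc, AddChar.map_zero_eq_one]

end FormSequence

theorem fundamental_four_term_sequence_exact_general
    (C₂ C₁ C₀ : Type*) [AddCommGroup C₂] [AddCommGroup C₁] [AddCommGroup C₀]
    [Module ℤ C₂] [Module ℤ C₁] [Module ℤ C₀]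
    (bd2 : C₂ →ₗ[ℤ] C₁) (bd1 : C₁ →ₗ[ℤ] C₀)
    (hcomplex : bd1 ∘ₗ bd2 = 0) :
    FundSeqOfFormsExact bd2 bd1 Circle ∧ FundSeqOfFormsExact bd2 bd1 ℂˣ :=
  ⟨fundSeqOfFormsExact_of_divisible bd2 bd1 hcomplex Circle,
    fundSeqOfFormsExact_of_divisible bd2 bd1 hcomplex ℂˣ⟩

/-- for `∂₂ : C₂ → C₁`, `∂₁ : C₁ → C₀` with `∂₁ ∘ ∂₂ = 0` between finitely
generated free ℤ-modules, the sequence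
`1 → H¹ → Hom(C₁,G) ⧸ im d₀ → Hom(C₂,G) → Hom(ker ∂₂, G) → 1` is exact for `G = Circle`
and for `G = ℂˣ`. -/
theorem fundamental_four_term_sequence_exact
    (C₂ C₁ C₀ : Type*) [AddCommGroup C₂] [AddCommGroup C₁] [AddCommGroup C₀]
    [Module ℤ C₂] [Module ℤ C₁] [Module ℤ C₀]
    [Module.Free ℤ C₂] [Module.Free ℤ C₁] [Module.Free ℤ C₀]
    [Module.Finite ℤ C₂] [Module.Finite ℤ C₁] [Module.Finite ℤ C₀]
    (bd2 : C₂ →ₗ[ℤ] C₁) (bd1 : C₁ →ₗ[ℤ] C₀)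
    (hcomplex : bd1 ∘ₗ bd2 = 0) :
    FundSeqOfFormsExact bd2 bd1 Circle ∧ FundSeqOfFormsExact bd2 bd1 ℂˣ :=
  fundamental_four_term_sequence_exact_general C₂ C₁ C₀ bd2 bd1 hcomplex
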